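/- Let f₁ be a hyperbolic analytic circle diffeomorphism with rot f₁ = 0, and let f₂ ≠ id be an analytic circle diffeomorphism. Then for every ρ ∈ [0, 1/2] there exists an analytic circle diffeomorphism h such that rot((h∘f₁∘h⁻¹) ∘ f₂⁻¹) = ρ (mod 1). -/

import Mathlib

open Filter Topology

/-- An analytic circle diffeomorphism, given by an analytic, strictly increasing lift
`F : ℝ → ℝ` with `F (x+1) = F x + 1`, together with an analytic inverse. -/
structure AnalyticCircleDiffeo where
  toFun : ℝ → ℝ
  invFun : ℝ → ℝ
  analyticAt_toFun : ∀ x, AnalyticAt ℝ toFun x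
  analyticAt_invFun : ∀ x, AnalyticAt ℝ invFun x
  strictMono_toFun : StrictMono toFun
  leftInverse : Function.LeftInverse invFun toFun
  rightInverse : Function.RightInverse invFun toFun
  map_add_one : ∀ x, toFun (x + 1) = toFun x + 1

namespace AnalyticCircleDiffeo

/-- The rotation number of (the chosen lift of) a circle diffeomorphism. -/
noncomputable def rot (f : AnalyticCircleDiffeo) : ℝ :=
  limUnder atTop fun n : ℕ => f.toFun^[n] 0 / n

/-- The composition of two analytic circle diffeomorphisms. -/
def comp (f g : AnalyticCircleDiffeo) : AnalyticCircleDiffeo where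
  toFun := f.toFun ∘ g.toFun
  invFun := g.invFun ∘ f.invFun
  analyticAt_toFun := fun x => (f.analyticAt_toFun _).comp (g.analyticAt_toFun x)
  analyticAt_invFun := fun x => (g.analyticAt_invFun _).comp (f.analyticAt_invFun x)
  strictMono_toFun := f.strictMono_toFun.comp g.strictMono_toFun
  leftInverse := fun x => by
    show g.invFun (f.invFun (f.toFun (g.toFun x))) = x
    rw [f.leftInverse (g.toFun x), g.leftInverse x]
  rightInverse := fun x => by
    show f.toFun (g.toFun (g.invFun (f.invFun x))) = x
    rw [g.rightInverse (f.invFun x), f.rightInverse x]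
  map_add_one := fun x => by
    show f.toFun (g.toFun (x + 1)) = f.toFun (g.toFun x) + 1
    rw [g.map_add_one, f.map_add_one]

/-- The inverse of an analytic circle diffeomorphism. -/
def symm (f : AnalyticCircleDiffeo) : AnalyticCircleDiffeo where
  toFun := f.invFun
  invFun := f.toFun
  analyticAt_toFun := f.analyticAt_invFun
  analyticAt_invFun := f.analyticAt_toFun
  strictMono_toFun := fun x y hxy => by
    have h := f.strictMono_toFun.lt_iff_lt (a := f.invFun x) (b := f.invFun y)
    rw [f.rightInverse x, f.rightInverse y] at h
    exact h.mp hxy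
  leftInverse := f.rightInverse
  rightInverse := f.leftInverse
  map_add_one := fun x => by
    apply f.strictMono_toFun.injective
    rw [f.rightInverse, f.map_add_one, f.rightInverse]

/-- The circle diffeomorphism `f + ω : x ↦ f x + ω`. -/
noncomputable def addConst (f : AnalyticCircleDiffeo) (ω : ℝ) : AnalyticCircleDiffeo where
  toFun := fun x => f.toFun x + ω
  invFun := fun x => f.invFun (x - ω)
  analyticAt_toFun := fun x => (f.analyticAt_toFun x).add analyticAt_const
  analyticAt_invFun := fun x => by
    have h1 : AnalyticAt ℝ (fun y : ℝ => y - ω) x := analyticAt_id.sub analyticAt_const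
    have h2 : AnalyticAt ℝ (f.invFun ∘ fun y : ℝ => y - ω) x :=
      AnalyticAt.comp (g := f.invFun) (f := fun y : ℝ => y - ω)
        (f.analyticAt_invFun (x - ω)) h1
    exact h2
  strictMono_toFun := fun x y hxy => add_lt_add_of_lt_of_le (f.strictMono_toFun hxy) (le_refl ω)
  leftInverse := fun x => by
    show f.invFun (f.toFun x + ω - ω) = x
    rw [add_sub_cancel_right, f.leftInverse x]
  rightInverse := fun x => by
    show f.toFun (f.invFun (x - ω)) + ω = x
    rw [f.rightInverse (x - ω)]; ring
  map_add_one := fun x => by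
    show f.toFun (x + 1) + ω = f.toFun x + ω + 1
    rw [f.map_add_one]; ring

/-- Two circle diffeomorphisms are analytically conjugate: `f₂ = h ∘ f₁ ∘ h⁻¹` as maps
of `ℝ/ℤ`; in terms of lifts, `h ∘ f₁ = f₂ ∘ h + k` for some integer `k`. -/
def Conjugate (f₁ f₂ : AnalyticCircleDiffeo) : Prop :=
  ∃ h : AnalyticCircleDiffeo, ∃ k : ℤ,
    ∀ x, h.toFun (f₁.toFun x) = f₂.toFun (h.toFun x) + k

/-- `f` is the identity of `ℝ/ℤ`, i.e. its lift is an integer translation. -/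
def IsId (f : AnalyticCircleDiffeo) : Prop :=
  ∃ k : ℤ, ∀ x, f.toFun x = x + k

/-- A circle diffeomorphism (with rotation number `0 mod 1`) is hyperbolic if it has a
fixed point on `ℝ/ℤ` and the multiplier at every fixed point is `≠ 1`. -/
def Hyperbolic (f : AnalyticCircleDiffeo) : Prop :=
  (∃ x : ℝ, ∃ k : ℤ, f.toFun x = x + k) ∧
    ∀ x : ℝ, (∃ k : ℤ, f.toFun x = x + k) → deriv f.toFun x ≠ 1

end AnalyticCircleDiffeo

/-- A real number is Diophantine. -/
def Diophantine (ρ : ℝ) : Prop :=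
  ∃ C > (0:ℝ), ∃ β > (0:ℝ), ∀ p : ℤ, ∀ q : ℕ, 0 < q →
    |ρ - p / q| ≥ C / (q : ℝ) ^ ((2:ℝ) + β)

/-!
Near a hyperbolic fixed point of `f₁`, the displacement `f₁ x - x` takes values slightly above
and slightly below an integer `k`, say at `v₀` and `v₁`; and since `f₂ ≠ id` there is a point `w`
where `f₂ w - w` is not an integer. If `H` sends `v` to `w` and `f₁ v` to `f₂ w + m`, then
`G = H ∘ f₁ ∘ H⁻¹ ∘ f₂⁻¹` satisfies `G (f₂ w) = f₂ w + m`, so `rot G = m`. Such `H` exist by a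
two-point interpolation, built from the iterates of `x ↦ x - sin (2πx) / (4π)`, which squeeze
or stretch any interval of length `< 1` to any prescribed length `< 1`. This yields conjugators
`H₀`, `H₁` with rotation numbers `m - 1` and `m`. Along the segment `(1 - t) H₀ + t H₁` of
analytic circle diffeomorphisms the rotation number varies continuously, so it takes every value
in `[m - 1, m]`.
-/

open Set Function

theorem continuous_rightInverse_of_strictMono {X : Type*} [TopologicalSpace X] {F G : X → ℝ → ℝ}
    (hF : Continuous fun p : X × ℝ => F p.1 p.2) (hmono : ∀ t, StrictMono (F t))
    (hG : ∀ t, RightInverse (G t) (F t)) : Continuous fun p : X × ℝ => G p.1 p.2 := by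
  refine continuous_iff_continuousAt.2 fun q => tendsto_order.2 ⟨fun u hu => ?_, fun u hu => ?_⟩
  all_goals
    have hFu : ContinuousAt (fun p : X × ℝ => F p.1 u) q :=
      (hF.comp (continuous_fst.prodMk continuous_const)).continuousAt
  · have hlt : F q.1 u < q.2 := hG q.1 q.2 ▸ hmono q.1 hu
    filter_upwards [hFu.eventually_lt continuousAt_snd hlt] with p hp
    exact (hmono p.1).lt_iff_lt.1 (by rwa [hG p.1 p.2])
  · have hlt : q.2 < F q.1 u := hG q.1 q.2 ▸ hmono q.1 hu
    filter_upwards [continuousAt_snd.eventually_lt hFu hlt] with p hp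
    exact (hmono p.1).lt_iff_lt.1 (by rwa [hG p.1 p.2])

theorem CircleDeg1Lift.continuous_translationNumber {X : Type*} [TopologicalSpace X]
    {F : X → CircleDeg1Lift} (hF : Continuous fun p : X × ℝ => F p.1 p.2) :
    Continuous fun t => (F t).translationNumber := by
  have hcont : ∀ n : ℕ, Continuous fun t => (F t ^ n) 0 := by
    intro n
    induction n with
    | zero => simpa using continuous_const
    | succ n ih =>
      simp only [pow_succ', CircleDeg1Lift.mul_apply]
      exact hF.comp (continuous_id.prodMk ih)
  refine TendstoUniformly.continuous (p := atTop) ?_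
    (Frequently.of_forall fun n => (hcont n).div_const (n : ℝ))
  refine Metric.tendstoUniformly_iff.2 fun ε hε => ?_
  obtain ⟨N, hN⟩ := exists_nat_gt ε⁻¹
  filter_upwards [eventually_gt_atTop N] with n hn t
  have hn0 : (0 : ℝ) < n := (inv_pos.2 hε).trans (hN.trans (Nat.cast_lt.2 hn))
  -- uniformly in `t`, `(F t ^ n) 0` stays within distance `1` of `n τ (F t)`
  calc dist (F t).translationNumber ((F t ^ n) 0 / n)
        = dist ((F t ^ n) 0) (n * (F t).translationNumber) / n := by
          rw [Real.dist_eq, Real.dist_eq, eq_div_iff hn0.ne', ← abs_of_pos hn0, ← abs_mul,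
            abs_of_pos hn0, ← abs_neg]
          congr 1
          field_simp
          ring
    _ ≤ 1 / n := by gcongr; exact (F t).dist_pow_map_zero_mul_translationNumber_le n
    _ < ε := by
          rw [div_lt_iff₀ hn0]
          have := (inv_lt_iff_one_lt_mul₀ hε).1 (hN.trans (Nat.cast_lt.2 hn))
          linarith

theorem tendsto_iterate_of_forall_mem_Ioo {f : ℝ → ℝ} (hf : Continuous f) {a b : ℝ}
    (h : ∀ y ∈ Ioo a b, f y ∈ Ioo a y) {x : ℝ} (hx : x ∈ Ioo a b) :
    Tendsto (fun n => f^[n] x) atTop (𝓝 a) := by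
  have hmem : ∀ n, f^[n] x ∈ Ioo a b := by
    intro n
    induction n with
    | zero => exact hx
    | succ n ih =>
      rw [iterate_succ_apply']
      exact ⟨(h _ ih).1, (h _ ih).2.trans ih.2⟩
  have hanti : Antitone fun n => f^[n] x := antitone_nat_of_succ_le fun n => by
    rw [iterate_succ_apply']
    exact (h _ (hmem n)).2.le
  have hbdd : BddBelow (range fun n => f^[n] x) := ⟨a, forall_mem_range.2 fun n => (hmem n).1.le⟩
  have hlim := tendsto_atTop_ciInf hanti hbdd
  have hfix : f (⨅ n, f^[n] x) = ⨅ n, f^[n] x := isFixedPt_of_tendsto_iterate hlim hf.continuousAt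
  rcases (le_ciInf fun n => (hmem n).1.le : a ≤ ⨅ n, f^[n] x).eq_or_lt with hL | hL
  · rwa [← hL] at hlim
  · exact absurd hfix (h _ ⟨hL, (ciInf_le hbdd 0).trans_lt (hmem 0).2⟩).2.ne

theorem exists_mem_Ioo_of_deriv_ne_zero {g : ℝ → ℝ} {a ε : ℝ} (hd : deriv g a ≠ 0) (hε : 0 < ε) :
    (∃ x, g x ∈ Ioo (g a) (g a + ε)) ∧ ∃ x, g x ∈ Ioo (g a - ε) (g a) := by
  have hnear : ∀ᶠ x in 𝓝 a, g x ∈ Ioo (g a - ε) (g a + ε) :=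
    (differentiableAt_of_deriv_ne_zero hd).continuousAt.eventually
      (Ioo_mem_nhds (by linarith) (by linarith))
  have habove : ∃ᶠ x in 𝓝 a, g a < g x := by
    have : ¬IsLocalMax g a := fun h => hd h.deriv_eq_zero
    simpa [IsLocalMax, IsMaxFilter] using this
  have hbelow : ∃ᶠ x in 𝓝 a, g x < g a := by
    have : ¬IsLocalMin g a := fun h => hd h.deriv_eq_zero
    simpa [IsLocalMin, IsMinFilter] using this
  obtain ⟨x, hx, hxε⟩ := (habove.and_eventually hnear).exists
  obtain ⟨y, hy, hyε⟩ := (hbelow.and_eventually hnear).exists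
  exact ⟨⟨x, hx, hxε.2⟩, ⟨y, hyε.1, hy⟩⟩

theorem Homeomorph.analyticAt_symm_of_deriv_ne_zero {𝕜 : Type*} [NontriviallyNormedField 𝕜]
    [CompleteSpace 𝕜] (e : 𝕜 ≃ₜ 𝕜) {y : 𝕜} (he : AnalyticAt 𝕜 e (e.symm y))
    (he' : deriv e (e.symm y) ≠ 0) : AnalyticAt 𝕜 e.symm y :=
  e.toOpenPartialHomeomorph.analyticAt_symm (i := .unitsEquivAut 𝕜 (.mk0 _ he')) (by simp) he <|
    ContinuousLinearMap.ext_ring <| by simp [he.differentiableAt.hasDerivAt.hasFDerivAt.fderiv]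

namespace AnalyticCircleDiffeo

variable (f : AnalyticCircleDiffeo)

theorem continuous_toFun : Continuous f.toFun :=
  continuous_iff_continuousAt.2 fun x => (f.analyticAt_toFun x).continuousAt

theorem continuous_invFun : Continuous f.invFun :=
  continuous_iff_continuousAt.2 fun x => (f.analyticAt_invFun x).continuousAt

theorem toFun_injective : Injective toFun := by
  rintro ⟨F, G, -, -, hF, -, hG, -⟩ ⟨F', G', -, -, -, -, hG', -⟩ (rfl : F = F')
  obtain rfl : G = G' := funext fun y => hF.injective ((hG y).trans (hG' y).symm)
  rfl

def toLift : CircleDeg1Lift :=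
  ⟨⟨f.toFun, f.strictMono_toFun.monotone⟩, f.map_add_one⟩

@[simp]
theorem coe_toLift : ⇑f.toLift = f.toFun := rfl

theorem rot_eq_translationNumber : f.rot = f.toLift.translationNumber := by
  refine (f.toLift.tendsto_translation_number₀.congr fun n => ?_).limUnder_eq
  rw [CircleDeg1Lift.coe_pow, coe_toLift]

theorem rot_eq_of_eq_add_int {x : ℝ} {m : ℤ} (h : f.toFun x = x + m) : f.rot = m := by
  rw [rot_eq_translationNumber]
  exact f.toLift.translationNumber_of_eq_add_int h

theorem deriv_pos (x : ℝ) : 0 < deriv f.toFun x := by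
  refine f.strictMono_toFun.monotone.deriv_nonneg.lt_of_ne' fun h => ?_
  have hcomp := ((f.analyticAt_invFun (f.toFun x)).differentiableAt.hasDerivAt.comp x
    (f.analyticAt_toFun x).differentiableAt.hasDerivAt)
  rw [show f.invFun ∘ f.toFun = id from funext f.leftInverse, h, mul_zero] at hcomp
  exact zero_ne_one (hcomp.unique (hasDerivAt_id x))

section OfDerivPos

variable {F : ℝ → ℝ} (hF : ∀ x, AnalyticAt ℝ F x) (hF' : ∀ x, 0 < deriv F x)
  (hF1 : ∀ x, F (x + 1) = F x + 1)

noncomputable def ofDerivPos : AnalyticCircleDiffeo :=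
  let L : CircleDeg1Lift := ⟨⟨F, (strictMono_of_deriv_pos hF').monotone⟩, hF1⟩
  let e : ℝ ≃o ℝ := (strictMono_of_deriv_pos hF').orderIsoOfSurjective F
    (L.continuous_iff_surjective.1 (continuous_iff_continuousAt.2 fun x => (hF x).continuousAt))
  { toFun := F
    invFun := e.symm
    analyticAt_toFun := hF
    analyticAt_invFun := fun _ =>
      e.toHomeomorph.analyticAt_symm_of_deriv_ne_zero (hF _) (hF' _).ne'
    strictMono_toFun := e.strictMono
    leftInverse := e.symm_apply_apply
    rightInverse := e.apply_symm_apply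
    map_add_one := hF1 }

@[simp]
theorem ofDerivPos_toFun : (ofDerivPos hF hF' hF1).toFun = F := rfl

end OfDerivPos

def refl : AnalyticCircleDiffeo where
  toFun := id
  invFun := id
  analyticAt_toFun _ := analyticAt_id
  analyticAt_invFun _ := analyticAt_id
  strictMono_toFun := strictMono_id
  leftInverse _ := rfl
  rightInverse _ := rfl
  map_add_one _ := rfl

noncomputable def translate (c : ℝ) : AnalyticCircleDiffeo := refl.addConst c

def iterate : ℕ → AnalyticCircleDiffeo
  | 0 => refl
  | n + 1 => f.comp (iterate n)

theorem iterate_toFun (n : ℕ) : (f.iterate n).toFun = f.toFun^[n] := by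
  induction n with
  | zero => rfl
  | succ n ih => exact (congrArg (f.toFun ∘ ·) ih).trans (iterate_succ' _ _).symm

open Real in
/-- `x ↦ x - sin (2πx) / (4π)`: its fixed points are `½ℤ`, the integers attracting and the
half-integers repelling. -/
noncomputable def bump : AnalyticCircleDiffeo :=
  ofDerivPos (F := fun x => x - sin (2 * π * x) / (4 * π))
    (fun _ => by fun_prop)
    (fun x => by
      have hd : HasDerivAt (fun x => x - sin (2 * π * x) / (4 * π))
          (1 - cos (2 * π * x) / 2) x := by
        refine ((hasDerivAt_id' x).sub
          ((((hasDerivAt_id' x).const_mul (2 * π)).sin).div_const (4 * π))).congr_deriv ?_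
        field_simp
        ring
      rw [hd.deriv]
      linarith [cos_le_one (2 * π * x)])
    (fun x => by rw [mul_add, mul_one, sin_add_two_pi]; ring)

open Real in
theorem bump_toFun (x : ℝ) : bump.toFun x = x - sin (2 * π * x) / (4 * π) := rfl

theorem bump_neg (x : ℝ) : bump.toFun (-x) = -bump.toFun x := by
  simp only [bump_toFun, mul_neg, Real.sin_neg]
  ring

open Real in
theorem bump_mem_Ioo {x : ℝ} (hx : x ∈ Ioo (0 : ℝ) (1 / 2)) : bump.toFun x ∈ Ioo 0 x := by
  have hsin : 0 < sin (2 * π * x) :=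
    sin_pos_of_pos_of_lt_pi (by nlinarith [hx.1, pi_pos]) (by nlinarith [hx.2, pi_pos])
  refine ⟨?_, by rw [bump_toFun]; linarith [div_pos hsin (by positivity : (0 : ℝ) < 4 * π)]⟩
  simpa [bump_toFun] using bump.strictMono_toFun hx.1

theorem tendsto_iterate_bump_zero {x : ℝ} (hx : x ∈ Ioo (-(1 / 2) : ℝ) (1 / 2)) :
    Tendsto (fun n => bump.toFun^[n] x) atTop (𝓝 0) := by
  have hpos : ∀ y ∈ Ioo (0 : ℝ) (1 / 2), Tendsto (fun n => bump.toFun^[n] y) atTop (𝓝 0) :=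
    fun y => tendsto_iterate_of_forall_mem_Ioo bump.continuous_toFun fun _ => bump_mem_Ioo
  rcases lt_trichotomy x 0 with hx0 | rfl | hx0
  · have hodd : Semiconj Neg.neg bump.toFun bump.toFun := fun y => (bump_neg y).symm
    have h := fun n => hodd.iterate_right n (-x)
    simpa only [h, neg_neg, neg_zero] using (hpos (-x) ⟨by linarith, by linarith [hx.1]⟩).neg
  · simp [iterate_fixed (show bump.toFun 0 = 0 by simp [bump_toFun])]
  · exact hpos x ⟨hx0, hx.2⟩

theorem tendsto_iterate_bump_one {x : ℝ} (hx : x ∈ Ioo (1 / 2 : ℝ) (3 / 2)) :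
    Tendsto (fun n => bump.toFun^[n] x) atTop (𝓝 1) := by
  have hper : Function.Commute bump.toFun (· + 1) := bump.map_add_one
  have h := fun n => hper.iterate_left n (x - 1)
  simp only [sub_add_cancel] at h
  have hx' : x - 1 ∈ Ioo (-(1 / 2) : ℝ) (1 / 2) := ⟨by linarith [hx.1], by linarith [hx.2]⟩
  simpa only [← h, zero_add] using (tendsto_iterate_bump_zero hx').add_const 1

theorem exists_iterate_bump_sub_eq {β γ : ℝ} (hβ : β ∈ Ioo (0 : ℝ) 1)
    (hγ : γ ∈ Ioo (0 : ℝ) 1) :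
    ∃ (n : ℕ) (e : ℝ), bump.toFun^[n] (e + β) - bump.toFun^[n] e = γ := by
  set g : ℕ → ℝ → ℝ := fun n e => bump.toFun^[n] (e + β) - bump.toFun^[n] e
  -- `[e, e + β]` is squeezed onto `0` for `e = -β/2`, stretched onto `[0, 1]` for `e = (1-β)/2`
  have h₀ : Tendsto (fun n => g n (-(β / 2))) atTop (𝓝 0) := by
    simp only [g, show -(β / 2) + β = β / 2 by ring]
    simpa using (tendsto_iterate_bump_zero ⟨by linarith [hβ.1], by linarith [hβ.2]⟩).sub
      (tendsto_iterate_bump_zero ⟨by linarith [hβ.2], by linarith [hβ.1]⟩)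
  have h₁ : Tendsto (fun n => g n ((1 - β) / 2)) atTop (𝓝 1) := by
    simp only [g, show (1 - β) / 2 + β = (1 + β) / 2 by ring]
    simpa using (tendsto_iterate_bump_one ⟨by linarith [hβ.1], by linarith [hβ.2]⟩).sub
      (tendsto_iterate_bump_zero ⟨by linarith [hβ.2], by linarith [hβ.1]⟩)
  obtain ⟨n, hn₀, hn₁⟩ :=
    ((h₀.eventually_lt_const hγ.1).and (h₁.eventually_const_lt hγ.2)).exists
  have hg : Continuous (g n) := by
    have := bump.continuous_toFun.iterate n
    fun_prop
  obtain ⟨e, -, he⟩ :=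
    intermediate_value_uIcc hg.continuousOn (mem_uIcc.2 (Or.inl ⟨hn₀.le, hn₁.le⟩))
  exact ⟨n, e, he⟩

@[simp]
theorem comp_toFun (f g : AnalyticCircleDiffeo) : (f.comp g).toFun = f.toFun ∘ g.toFun := rfl

@[simp]
theorem addConst_toFun (c x : ℝ) : (f.addConst c).toFun x = f.toFun x + c := rfl

@[simp]
theorem translate_toFun (c x : ℝ) : (translate c).toFun x = x + c := rfl

theorem exists_apply_eq_and_apply_eq {v v' w w' : ℝ} (hv : v' ∈ Ioo v (v + 1))
    (hw : w' ∈ Ioo w (w + 1)) :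
    ∃ H : AnalyticCircleDiffeo, H.toFun v = w ∧ H.toFun v' = w' := by
  obtain ⟨n, e, he⟩ := exists_iterate_bump_sub_eq (β := v' - v) (γ := w' - w)
    ⟨by linarith [hv.1], by linarith [hv.2]⟩ ⟨by linarith [hw.1], by linarith [hw.2]⟩
  refine ⟨((bump.iterate n).comp (translate (e - v))).addConst (w - bump.toFun^[n] e), ?_, ?_⟩
  · simp [iterate_toFun]
  · have hv' : v' + (e - v) = e + (v' - v) := by ring
    simp only [addConst_toFun, comp_toFun, iterate_toFun, comp_apply, translate_toFun, hv']
    linarith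

section LineMap

variable (H₀ H₁ : AnalyticCircleDiffeo)

noncomputable def lineMap (t : unitInterval) : AnalyticCircleDiffeo :=
  ofDerivPos (F := fun x => (1 - t) * H₀.toFun x + t * H₁.toFun x)
    (fun x => by have := H₀.analyticAt_toFun x; have := H₁.analyticAt_toFun x; fun_prop)
    (fun x => by
      have hd : HasDerivAt (fun x => (1 - t) * H₀.toFun x + t * H₁.toFun x)
          ((1 - t) * deriv H₀.toFun x + t * deriv H₁.toFun x) x :=
        ((H₀.analyticAt_toFun x).differentiableAt.hasDerivAt.const_mul _).add
          ((H₁.analyticAt_toFun x).differentiableAt.hasDerivAt.const_mul _)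
      rw [hd.deriv]
      exact convex_Ioi (0 : ℝ) (H₀.deriv_pos x) (H₁.deriv_pos x) (sub_nonneg.2 t.2.2) t.2.1
        (by ring))
    (fun x => by rw [H₀.map_add_one, H₁.map_add_one]; ring)

theorem lineMap_zero : lineMap H₀ H₁ 0 = H₀ :=
  toFun_injective <| funext fun x => by simp [lineMap]

theorem lineMap_one : lineMap H₀ H₁ 1 = H₁ :=
  toFun_injective <| funext fun x => by simp [lineMap]

theorem continuous_lineMap :
    Continuous fun p : unitInterval × ℝ => (lineMap H₀ H₁ p.1).toFun p.2 := by
  have := H₀.continuous_toFun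
  have := H₁.continuous_toFun
  simp only [lineMap, ofDerivPos_toFun]
  fun_prop

end LineMap

section Conjugation

variable (f₁ f₂ : AnalyticCircleDiffeo)

theorem continuous_rot_lineMap (H₀ H₁ : AnalyticCircleDiffeo) :
    Continuous fun t =>
      rot ((((lineMap H₀ H₁ t).comp f₁).comp (lineMap H₀ H₁ t).symm).comp f₂.symm) := by
  simp only [rot_eq_translationNumber]
  refine CircleDeg1Lift.continuous_translationNumber ?_
  have hH := continuous_lineMap H₀ H₁
  have hHinv := continuous_rightInverse_of_strictMono hH
    (fun t => (lineMap H₀ H₁ t).strictMono_toFun) fun t => (lineMap H₀ H₁ t).rightInverse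
  exact hH.comp (continuous_fst.prodMk (f₁.continuous_toFun.comp
    (hHinv.comp (continuous_fst.prodMk (f₂.continuous_invFun.comp continuous_snd)))))

theorem exists_rot_eq_of_mem_Icc (H₀ H₁ : AnalyticCircleDiffeo) {x : ℝ}
    (hx : x ∈ Icc (rot (((H₀.comp f₁).comp H₀.symm).comp f₂.symm))
      (rot (((H₁.comp f₁).comp H₁.symm).comp f₂.symm))) :
    ∃ H : AnalyticCircleDiffeo, rot (((H.comp f₁).comp H.symm).comp f₂.symm) = x := by
  have hivt := intermediate_value_univ 0 1 (continuous_rot_lineMap f₁ f₂ H₀ H₁)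
  simp only [lineMap_zero, lineMap_one] at hivt
  obtain ⟨t, ht⟩ := hivt hx
  exact ⟨_, ht⟩

theorem exists_rot_eq_int {v w : ℝ} {k m : ℤ} (hv : f₁.toFun v - k ∈ Ioo v (v + 1))
    (hw : f₂.toFun w + m - k ∈ Ioo w (w + 1)) :
    ∃ H : AnalyticCircleDiffeo, rot (((H.comp f₁).comp H.symm).comp f₂.symm) = m := by
  obtain ⟨H, hHv, hHv'⟩ := exists_apply_eq_and_apply_eq hv hw
  refine ⟨H, rot_eq_of_eq_add_int _ (x := f₂.toFun w) ?_⟩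
  have hH : H.toFun (f₁.toFun v) = H.toFun (f₁.toFun v - k) + k := by
    have := H.toLift.map_add_int (f₁.toFun v - k) k
    rwa [sub_add_cancel] at this
  have hHinv : H.invFun w = v := by rw [← hHv, H.leftInverse]
  show H.toFun (f₁.toFun (H.invFun (f₂.invFun (f₂.toFun w)))) = _
  rw [f₂.leftInverse, hHinv, hH, hHv']
  ring

end Conjugation

theorem exists_sub_int_mem_Ioo_of_hyperbolic {f : AnalyticCircleDiffeo} (hf : Hyperbolic f) :
    ∃ (k : ℤ) (v₀ v₁ : ℝ), f.toFun v₀ - k ∈ Ioo v₀ (v₀ + 1) ∧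
      f.toFun v₁ - (k - 1 : ℤ) ∈ Ioo v₁ (v₁ + 1) := by
  obtain ⟨⟨a, k, ha⟩, hder⟩ := hf
  have hd : deriv (fun x => f.toFun x - x) a ≠ 0 := by
    have hd : HasDerivAt (fun x => f.toFun x - x) (deriv f.toFun a - 1) a :=
      (f.analyticAt_toFun a).differentiableAt.hasDerivAt.sub (hasDerivAt_id' a)
    rw [hd.deriv]
    exact sub_ne_zero.2 (hder a ⟨k, ha⟩)
  obtain ⟨⟨v₀, hv₀⟩, ⟨v₁, hv₁⟩⟩ := exists_mem_Ioo_of_deriv_ne_zero hd one_pos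
  simp only [ha, add_sub_cancel_left, mem_Ioo] at hv₀ hv₁
  refine ⟨k, v₀, v₁, ⟨?_, ?_⟩, ⟨?_, ?_⟩⟩ <;> push_cast <;> linarith

theorem exists_fract_sub_ne_zero {f : AnalyticCircleDiffeo} (hf : ¬IsId f) :
    ∃ w, Int.fract (f.toFun w - w) ≠ 0 := by
  by_contra! h
  obtain ⟨m, hm⟩ := Int.fract_eq_zero_iff.1 (h 0)
  refine hf ⟨m, fun x => ?_⟩
  have hconst := isPreconnected_univ.constant_of_mapsTo
    Int.isClosedEmbedding_coe_real.isInducing.isDiscrete_range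
    (f.continuous_toFun.sub continuous_id).continuousOn
    (fun y _ => Int.fract_eq_zero_iff.1 (h y)) (mem_univ x) (mem_univ 0)
  change f.toFun x - x = f.toFun 0 - 0 at hconst
  linarith

end AnalyticCircleDiffeo

open AnalyticCircleDiffeo in
theorem statement6_general (f₁ f₂ : AnalyticCircleDiffeo)
    (h₁hyp : Hyperbolic f₁)
    (h₂ : ¬ IsId f₂) :
    ∀ ρ ∈ Set.Icc (0 : ℝ) (1 / 2),
      ∃ h : AnalyticCircleDiffeo, ∃ k : ℤ,
        rot (((h.comp f₁).comp h.symm).comp f₂.symm) = ρ + (k : ℝ) := by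
  intro ρ hρ
  obtain ⟨k, v₀, v₁, hv₀, hv₁⟩ := exists_sub_int_mem_Ioo_of_hyperbolic h₁hyp
  obtain ⟨w, hw⟩ := exists_fract_sub_ne_zero h₂
  set c := f₂.toFun w - w
  have hw' : ∀ j : ℤ, f₂.toFun w + (j - ⌊c⌋ : ℤ) - j ∈ Ioo w (w + 1) := fun j => by
    have h0 := (Int.fract_nonneg c).lt_of_ne' hw
    have h1 := Int.fract_lt_one c
    rw [Int.fract] at h0 h1
    push_cast
    constructor <;> linarith
  obtain ⟨H₀, hH₀⟩ := exists_rot_eq_int f₁ f₂ hv₁ (hw' (k - 1))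
  obtain ⟨H₁, hH₁⟩ := exists_rot_eq_int f₁ f₂ hv₀ (hw' k)
  have hρ' : ρ + (k - 1 - ⌊c⌋ : ℤ) ∈
      Icc ((k - 1 - ⌊c⌋ : ℤ) : ℝ) (k - ⌊c⌋ : ℤ) := by
    push_cast
    constructor <;> linarith [hρ.1, hρ.2]
  obtain ⟨H, hH⟩ := exists_rot_eq_of_mem_Icc f₁ f₂ H₀ H₁ (by rwa [hH₀, hH₁])
  exact ⟨H, _, hH⟩

open AnalyticCircleDiffeo in
/-- For a hyperbolic analytic circle diffeomorphism `f₁` with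
`rot f₁ = 0 (mod 1)` and an analytic circle diffeomorphism `f₂ ≠ id`, every
`ρ ∈ [0, 1/2]` is attained `(mod 1)` as `rot ((h ∘ f₁ ∘ h⁻¹) ∘ f₂⁻¹)` for some analytic
circle diffeomorphism `h`. -/
theorem statement6 (f₁ f₂ : AnalyticCircleDiffeo)
    (h₁hyp : Hyperbolic f₁) (h₁rot : ∃ k : ℤ, rot f₁ = (k : ℝ))
    (h₂ : ¬ IsId f₂) :
    ∀ ρ ∈ Set.Icc (0 : ℝ) (1 / 2),
      ∃ h : AnalyticCircleDiffeo, ∃ k : ℤ,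
        rot (((h.comp f₁).comp h.symm).comp f₂.symm) = ρ + (k : ℝ) :=
  statement6_general f₁ f₂ h₁hyp h₂
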